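/- arXiv:0806.4802 — 2 statements merged into one kernel-verified Lean document; each statement's English description precedes it below -/
import Mathlib

section
/- In the scaled one-step NormalHedge setting, suppose the set I₂ = {i : R_i > 0} is nonempty and the average potential satisfies Ψ = (1/N)·Σ_{i=1}^N Φ(R_i) < 2.32. Then the average potential over I₂ increases by less than (2/3)·α after one update: (1/|I₂|)·Σ_{i∈I₂} (Φ(R'_i) − Φ(R_i)) < (2/3)·α. -/
open Finset

/-- The NormalHedge potential function: `Φ(x) = exp(x²/8)` for `x > 0`, `1` for `x ≤ 0`. -/
noncomputable def Phi (x : ℝ) : ℝ := if 0 < x then Real.exp (x ^ 2 / 8) else 1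

/-- Derivative of the potential: `Φ'(x) = (x/4)·exp(x²/8)` for `x > 0`, `0` for `x ≤ 0`. -/
noncomputable def Phi' (x : ℝ) : ℝ := if 0 < x then (x / 4) * Real.exp (x ^ 2 / 8) else 0

/-!
For an action with positive regret the update moves `R` by `d = -αR + (g - g_A)` with
`|d| ≤ 2.1√α`. On `(-∞, m]` the derivative `Φ'` grows at rate at most `Φ''(m)`, which gives the
second-order bound `Φ(y) ≤ Φ(x) + Φ'(x)(y - x) + Φ''(m)/2·(y - x)²`. Since `p ∝ Φ'(R)` and `Φ'`
vanishes off `I₂`, the first-order terms `Φ'(R_i)(g_i - g_A)` sum to zero over `I₂`. What remains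
for each action is the drift `-αR·Φ'(R) = -(α/4)R²e^{R²/8}` plus a curvature term of about
`0.55α(1 + R²/4)e^{R²/8}`; the drift absorbs the growth in `R`, leaving at most `(33/50)α`.
From `Ψ < 2.32` we get `R_i² < 8 log(2.32N)`, so `αR_i² < 1/100` and `Φ''` barely changes over
a step.
-/

open Real Set

theorem Convex.le_add_mul_sub_add_sq {f f' : ℝ → ℝ} {s : Set ℝ} {C : ℝ} (hs : Convex ℝ s)
    (hf : ∀ t ∈ s, HasDerivAt f (f' t) t)
    (hf' : ∀ a ∈ s, ∀ b ∈ s, a ≤ b → f' b - f' a ≤ C * (b - a)) {x y : ℝ}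
    (hx : x ∈ s) (hy : y ∈ s) :
    f y ≤ f x + f' x * (y - x) + C / 2 * (y - x) ^ 2 := by
  -- `C t² / 2 - f t` is convex on `s`, so it lies above its tangent line at `x`.
  set g : ℝ → ℝ := fun t ↦ C / 2 * t ^ 2 - f t
  have hg : ∀ t ∈ s, HasDerivAt g (C * t - f' t) t := fun t ht ↦ by
    refine (((hasDerivAt_pow 2 t).const_mul (C / 2)).sub (hf t ht)).congr_deriv ?_
    push_cast; ring
  have hconv : ConvexOn ℝ s g := by
    refine MonotoneOn.convexOn_of_deriv hs (fun t ht ↦ (hg t ht).continuousAt.continuousWithinAt)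
      (fun t ht ↦ (hg t (interior_subset ht)).differentiableAt.differentiableWithinAt) ?_
    intro a ha b hb hab
    rw [(hg a (interior_subset ha)).deriv, (hg b (interior_subset hb)).deriv]
    linarith [hf' a (interior_subset ha) b (interior_subset hb) hab]
  simp only [g] at hconv hg
  rcases lt_trichotomy x y with hxy | rfl | hyx
  · have h := hconv.le_slope_of_hasDerivAt hx hy hxy (hg x hx)
    rw [slope_def_field, le_div_iff₀ (sub_pos.2 hxy)] at h
    linarith
  · simp
  · have h := hconv.slope_le_of_hasDerivAt hy hx hyx (hg x hx)
    rw [slope_def_field, div_le_iff₀ (sub_pos.2 hyx)] at h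
    linarith

lemma Phi_eq (x : ℝ) : Phi x = exp (max x 0 ^ 2 / 8) := by
  unfold Phi
  split_ifs with h
  · rw [max_eq_left h.le]
  · simp [max_eq_right (not_lt.1 h)]

lemma Phi'_eq (x : ℝ) : Phi' x = max x 0 / 4 * exp (max x 0 ^ 2 / 8) := by
  unfold Phi'
  split_ifs with h
  · rw [max_eq_left h.le]
  · simp [max_eq_right (not_lt.1 h)]

lemma one_le_Phi (x : ℝ) : 1 ≤ Phi x := by
  rw [Phi_eq]; exact one_le_exp (by positivity)

lemma Phi'_nonneg (x : ℝ) : 0 ≤ Phi' x := by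
  rw [Phi'_eq]; positivity

lemma Phi'_pos {x : ℝ} (hx : 0 < x) : 0 < Phi' x := by
  rw [Phi'_eq, max_eq_left hx.le]; positivity

lemma Phi'_of_nonpos {x : ℝ} (hx : x ≤ 0) : Phi' x = 0 := by
  simp [Phi', not_lt.2 hx]

lemma hasDerivAt_Phi (x : ℝ) : HasDerivAt Phi (Phi' x) x := by
  refine hasDerivAt_of_hasDerivAt_of_ne' (x := 0) (fun y hy ↦ ?_) ?_ ?_ x
  · rcases hy.lt_or_gt with hy | hy
    · have hPhi : (fun _ ↦ 1 : ℝ → ℝ) =ᶠ[nhds y] Phi := by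
        filter_upwards [Iio_mem_nhds hy] with t ht
        simp [Phi, not_lt.2 (show t < 0 from ht).le]
      rw [Phi'_of_nonpos hy.le]
      exact (hasDerivAt_const y 1).congr_of_eventuallyEq hPhi.symm
    · have hPhi : (fun t ↦ exp (t ^ 2 / 8)) =ᶠ[nhds y] Phi := by
        filter_upwards [Ioi_mem_nhds hy] with t ht
        simp [Phi, show 0 < t from ht]
      have h := ((hasDerivAt_pow 2 y).div_const 8).exp
      refine (h.congr_of_eventuallyEq hPhi.symm).congr_deriv ?_
      simp [Phi', hy]; ring
  · rw [show Phi = fun x ↦ exp (max x 0 ^ 2 / 8) from funext Phi_eq]; fun_prop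
  · rw [show Phi' = fun x ↦ max x 0 / 4 * exp (max x 0 ^ 2 / 8) from funext Phi'_eq]; fun_prop

/-- The second derivative of `Φ` on `(0, ∞)`. -/
noncomputable def Phi'' (x : ℝ) : ℝ := (1 / 4 + x ^ 2 / 16) * exp (x ^ 2 / 8)

lemma Phi''_pos (x : ℝ) : 0 < Phi'' x := by
  unfold Phi''; positivity

lemma Phi''_le_Phi'' {x y : ℝ} (hx : 0 ≤ x) (hxy : x ≤ y) : Phi'' x ≤ Phi'' y := by
  unfold Phi''; gcongr

lemma hasDerivAt_mul_exp_sq (u : ℝ) :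
    HasDerivAt (fun u ↦ u / 4 * exp (u ^ 2 / 8)) (Phi'' u) u := by
  refine (((hasDerivAt_id u).div_const 4).mul ((hasDerivAt_pow 2 u).div_const 8).exp).congr_deriv ?_
  simp only [Phi'', id]; push_cast; ring

lemma Phi'_sub_le {s t m : ℝ} (hst : s ≤ t) (htm : t ≤ m) :
    Phi' t - Phi' s ≤ Phi'' m * (t - s) := by
  rcases le_or_gt m 0 with hm | hm
  · rw [Phi'_of_nonpos (htm.trans hm), Phi'_of_nonpos (hst.trans (htm.trans hm)), sub_zero]
    exact mul_nonneg (Phi''_pos m).le (sub_nonneg.2 hst)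
  -- `Φ' t = ψ (max t 0)` for `ψ u = u / 4 · exp (u² / 8)`, whose derivative `Φ''` is increasing
  -- on `[0, m]`, and `max · 0` is monotone and 1-Lipschitz.
  have hmax : max t 0 - max s 0 ≤ t - s := by
    simp only [max_def]; split_ifs <;> linarith
  rw [Phi'_eq, Phi'_eq]
  calc _ ≤ Phi'' m * (max t 0 - max s 0) := by
        refine (convex_Icc 0 m).image_sub_le_mul_sub_of_deriv_le
          (fun u _ ↦ (hasDerivAt_mul_exp_sq u).continuousAt.continuousWithinAt)
          (fun u _ ↦ (hasDerivAt_mul_exp_sq u).differentiableAt.differentiableWithinAt)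
          (fun u hu ↦ ?_) _ ⟨le_max_right s 0, ?_⟩ _ ⟨le_max_right t 0, ?_⟩ (max_le_max_right 0 hst)
        · rw [interior_Icc] at hu
          rw [(hasDerivAt_mul_exp_sq u).deriv]
          exact Phi''_le_Phi'' hu.1.le hu.2.le
        · exact max_le (hst.trans htm) hm.le
        · exact max_le htm hm.le
    _ ≤ Phi'' m * (t - s) := mul_le_mul_of_nonneg_left hmax (Phi''_pos m).le

lemma Phi_le_add_mul_sub_add_sq {x y m : ℝ} (hx : x ≤ m) (hy : y ≤ m) :
    Phi y ≤ Phi x + Phi' x * (y - x) + Phi'' m / 2 * (y - x) ^ 2 :=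
  (convex_Iic m).le_add_mul_sub_add_sq (fun t _ ↦ hasDerivAt_Phi t)
    (fun _ _ _ hb hab ↦ Phi'_sub_le hab hb) hx hy

lemma exp_mul_one_sub_le_one (u : ℝ) : exp u * (1 - u) ≤ 1 := by
  calc exp u * (1 - u) ≤ exp u * exp (-u) := by gcongr; exact one_sub_le_exp_neg u
    _ = 1 := by rw [← exp_add, add_neg_cancel, exp_zero]

lemma Phi''_le_of_sq_le {m R : ℝ} (h : m ^ 2 ≤ R ^ 2 + 43 / 100) :
    Phi'' m ≤ (443 / 1600 + R ^ 2 / 16) * exp (R ^ 2 / 8) * (800 / 757) := by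
  have hexp : exp (43 / 800 : ℝ) ≤ 800 / 757 := by
    convert exp_bound_div_one_sub_of_interval (x := 43 / 800) (by norm_num) (by norm_num) using 1
    norm_num
  calc Phi'' m ≤ (443 / 1600 + R ^ 2 / 16) * exp ((R ^ 2 + 43 / 100) / 8) :=
        mul_le_mul (by linarith) (exp_le_exp.2 (by linarith)) (exp_pos _).le (by positivity)
    _ = (443 / 1600 + R ^ 2 / 16) * exp (R ^ 2 / 8) * exp (43 / 800) := by
        rw [mul_assoc, ← exp_add]; ring_nf
    _ ≤ _ := mul_le_mul_of_nonneg_left hexp (by positivity)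

lemma Phi_update_sub_le {α R e : ℝ} (hα : 0 < α) (hα' : α ≤ 1 / 640) (hR : 0 < R)
    (hαR : α * R ^ 2 ≤ 1 / 100) (he : |e| ≤ 2 * √α) :
    Phi ((1 - α) * R + e) - Phi R - Phi' R * e ≤ 33 / 50 * α := by
  set s := √α
  have hs : s ^ 2 = α := sq_sqrt hα.le
  have hs0 : 0 < s := sqrt_pos.2 hα
  have hsR : s * R ≤ 1 / 10 := by nlinarith
  have hαR' : α * R ≤ s / 10 := by rw [← hs]; nlinarith
  have hd : |-(α * R) + e| ≤ 21 / 10 * s :=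
    calc |-(α * R) + e| ≤ |-(α * R)| + |e| := abs_add_le _ _
      _ = α * R + |e| := by rw [abs_neg, abs_of_pos (by positivity)]
      _ ≤ 21 / 10 * s := by linarith
  have hd2 : (-(α * R) + e) ^ 2 ≤ 441 / 100 * α :=
    calc (-(α * R) + e) ^ 2 = |-(α * R) + e| ^ 2 := (sq_abs _).symm
      _ ≤ (21 / 10 * s) ^ 2 := pow_le_pow_left₀ (abs_nonneg _) hd 2
      _ = 441 / 100 * α := by rw [mul_pow, hs]; norm_num
  have hm : (R + 21 / 10 * s) ^ 2 ≤ R ^ 2 + 43 / 100 := by nlinarith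
  have hTaylor := Phi_le_add_mul_sub_add_sq (x := R) (y := (1 - α) * R + e)
    (m := R + 21 / 10 * s) (by linarith) (by linarith [(abs_le.1 hd).2])
  have hcurv := Phi''_le_of_sq_le hm
  rw [show (1 - α) * R + e - R = -(α * R) + e by ring] at hTaylor
  have hPhi' : Phi' R = R / 4 * exp (R ^ 2 / 8) := by rw [Phi'_eq, max_eq_left hR.le]
  have hE := exp_mul_one_sub_le_one (R ^ 2 / 8)
  have hE0 := exp_pos (R ^ 2 / 8)
  calc Phi ((1 - α) * R + e) - Phi R - Phi' R * e
      ≤ Phi'' (R + 21 / 10 * s) / 2 * (-(α * R) + e) ^ 2 - α * R * Phi' R := by linarith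
    _ ≤ (443 / 1600 + R ^ 2 / 16) * exp (R ^ 2 / 8) * (800 / 757) / 2 * (441 / 100 * α)
          - α * R * (R / 4 * exp (R ^ 2 / 8)) := by
        rw [hPhi']; gcongr
    -- with `E = exp (R² / 8)`: `αE (0.6452 - 0.1044 R²) ≤ 0.6452 αE (1 - R² / 8) ≤ 0.6452 α`
    _ ≤ 33 / 50 * α := by nlinarith [mul_nonneg hE0.le (sq_nonneg R)]

lemma four_fifths_lt_log_two_point_three_two : (4 / 5 : ℝ) < log 2.32 := by
  have h := one_sub_inv_le_log_of_pos (x := 1.16) (by norm_num)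
  rw [show (2.32 : ℝ) = 2 * 1.16 by norm_num, log_mul (by norm_num) (by norm_num)]
  norm_num at h
  linarith [log_two_gt_d9]

lemma sq_lt_of_avg_Phi_lt {N : ℕ} {R : Fin N → ℝ} {c : ℝ}
    (hΨ : 1 / (N : ℝ) * ∑ i, Phi (R i) < c) {i : Fin N} (hi : 0 < R i) :
    R i ^ 2 < 8 * log (c * N) := by
  have hPhi : Phi (R i) < c * N := by
    rw [one_div, inv_mul_lt_iff₀ (by exact_mod_cast i.pos), mul_comm] at hΨ
    linarith [single_le_sum (fun k _ ↦ zero_le_one.trans (one_le_Phi (R k))) (mem_univ i)]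
  rw [Phi_eq, max_eq_left hi.le] at hPhi
  linarith [(lt_log_iff_exp_lt ((exp_pos _).trans hPhi)).2 hPhi]

lemma Phi_update_sub_le_of_avg_Phi_lt {N : ℕ} {α : ℝ} (hα0 : 0 < α)
    (hα : α < 1 / (800 * log (2.32 * N))) {R : Fin N → ℝ}
    (hΨ : 1 / (N : ℝ) * ∑ i, Phi (R i) < 2.32) {i : Fin N} (hi : 0 < R i) {e : ℝ}
    (he : |e| ≤ 2 * √α) :
    Phi ((1 - α) * R i + e) - Phi (R i) - Phi' (R i) * e ≤ 33 / 50 * α := by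
  set L := log (2.32 * N)
  have hL : 4 / 5 < L := four_fifths_lt_log_two_point_three_two.trans_le
    (log_le_log (by norm_num) (by linarith [show (1 : ℝ) ≤ N from Nat.one_le_cast.2 i.pos]))
  have hαL : α * L < 1 / 800 := by
    rw [lt_div_iff₀ (by positivity), mul_comm] at hα; linarith
  have hRL : R i ^ 2 < 8 * L := sq_lt_of_avg_Phi_lt hΨ hi
  exact Phi_update_sub_le hα0 (by nlinarith [mul_lt_mul_of_pos_left hL hα0]) hi
    (by nlinarith [mul_lt_mul_of_pos_left hRL hα0]) he

section Averages

variable {ι : Type*} {s : Finset ι} {p g : ι → ℝ}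

lemma abs_sum_mul_le_of_sum_eq_one {B : ℝ} (hp : ∀ i ∈ s, 0 ≤ p i) (hp1 : ∑ i ∈ s, p i = 1)
    (hg : ∀ i ∈ s, |g i| ≤ B) : |∑ i ∈ s, p i * g i| ≤ B :=
  calc |∑ i ∈ s, p i * g i| ≤ ∑ i ∈ s, p i * |g i| := by
        refine (abs_sum_le_sum_abs _ _).trans_eq (sum_congr rfl fun i hi ↦ ?_)
        rw [abs_mul, abs_of_nonneg (hp i hi)]
    _ ≤ ∑ i ∈ s, p i * B := sum_le_sum fun i hi ↦ mul_le_mul_of_nonneg_left (hg i hi) (hp i hi)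
    _ = B := by rw [← sum_mul, hp1, one_mul]

lemma sum_mul_sub_sum_mul_eq_zero (hp1 : ∑ i ∈ s, p i = 1) :
    ∑ i ∈ s, p i * (g i - ∑ j ∈ s, p j * g j) = 0 := by
  simp only [mul_sub, sum_sub_distrib, ← sum_mul, hp1, one_mul, sub_self]

lemma one_div_card_mul_sum_le {f : ι → ℝ} {c : ℝ} (hs : s.Nonempty) (hf : ∀ i ∈ s, f i ≤ c) :
    1 / (s.card : ℝ) * ∑ i ∈ s, f i ≤ c := by
  rw [one_div, inv_mul_le_iff₀ (by exact_mod_cast hs.card_pos), ← nsmul_eq_mul]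
  exact sum_le_card_nsmul s f c hf

end Averages

theorem normalHedge_positive_regret_average_step_general

    (N : ℕ)
    (α : ℝ) (hα0 : 0 < α) (hα : α < 1 / (800 * Real.log (2.32 * N)))
    (R g : Fin N → ℝ) (hg : ∀ i, |g i| ≤ Real.sqrt α)
    (p : Fin N → ℝ)
    (hp : ∀ i, p i =
      if 0 < ∑ k, Phi' (R k) then Phi' (R i) / ∑ k, Phi' (R k) else 1 / N)
    (gA : ℝ) (hgA : gA = ∑ i, p i * g i)
    (R' : Fin N → ℝ) (hR' : ∀ i, R' i = (1 - α) * R i + g i - gA)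
    (I₂ : Finset (Fin N)) (hI₂ : ∀ i, i ∈ I₂ ↔ 0 < R i) (hne : I₂.Nonempty)
    (hΨ : (1 / (N : ℝ)) * ∑ i, Phi (R i) < 2.32) :
    (1 / (I₂.card : ℝ)) * ∑ i ∈ I₂, (Phi (R' i) - Phi (R i)) < (2 / 3) * α := by
  obtain ⟨i₀, hi₀⟩ := hne
  set S := ∑ k, Phi' (R k)
  have hS : 0 < S := sum_pos' (fun k _ ↦ Phi'_nonneg _)
    ⟨i₀, mem_univ _, Phi'_pos ((hI₂ i₀).1 hi₀)⟩
  have hp' : ∀ i, p i = Phi' (R i) / S := fun i ↦ by rw [hp, if_pos hS]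
  have hp1 : ∑ i, p i = 1 := by simp only [hp', ← sum_div]; exact div_self hS.ne'
  have hgA_le : |gA| ≤ √α := hgA ▸ abs_sum_mul_le_of_sum_eq_one
    (fun i _ ↦ by rw [hp']; exact div_nonneg (Phi'_nonneg _) hS.le) hp1 (fun i _ ↦ hg i)
  have hbalance : ∑ i ∈ I₂, Phi' (R i) * (g i - gA) = 0 := by
    rw [sum_subset (subset_univ I₂) fun i _ hi ↦ by
      rw [Phi'_of_nonpos (not_lt.1 (mt (hI₂ i).2 hi)), zero_mul]]
    calc ∑ i, Phi' (R i) * (g i - gA) = S * ∑ i, p i * (g i - ∑ j, p j * g j) := by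
          rw [mul_sum, ← hgA]
          exact sum_congr rfl fun i _ ↦ by rw [hp']; field_simp
      _ = 0 := by rw [sum_mul_sub_sum_mul_eq_zero hp1, mul_zero]
  have hstep : ∀ i ∈ I₂, Phi (R' i) - Phi (R i) - Phi' (R i) * (g i - gA) ≤ 33 / 50 * α :=
    fun i hi ↦ by
      rw [hR' i, add_sub_assoc]
      exact Phi_update_sub_le_of_avg_Phi_lt hα0 hα hΨ ((hI₂ i).1 hi)
        (by linarith [abs_sub (g i) gA, hg i])
  calc 1 / (I₂.card : ℝ) * ∑ i ∈ I₂, (Phi (R' i) - Phi (R i))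
      = 1 / (I₂.card : ℝ) * ∑ i ∈ I₂, (Phi (R' i) - Phi (R i) - Phi' (R i) * (g i - gA)) := by
        rw [sum_sub_distrib _ (fun i ↦ Phi' (R i) * (g i - gA)), hbalance, sub_zero]
    _ ≤ 33 / 50 * α := one_div_card_mul_sum_le ⟨i₀, hi₀⟩ hstep
    _ < 2 / 3 * α := by linarith

/-- if the set of actions with positive regret is nonempty and the average
potential is below 2.32, then the average potential over that set increases by less than
`(2/3)·α` after one scaled NormalHedge update. -/
theorem normalHedge_positive_regret_average_step

    (N : ℕ) (hN : 1 ≤ N)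
    (α : ℝ) (hα0 : 0 < α) (hα : α < 1 / (800 * Real.log (2.32 * N)))
    (R g : Fin N → ℝ) (hg : ∀ i, |g i| ≤ Real.sqrt α)
    (p : Fin N → ℝ)
    (hp : ∀ i, p i =
      if 0 < ∑ k, Phi' (R k) then Phi' (R i) / ∑ k, Phi' (R k) else 1 / N)
    (gA : ℝ) (hgA : gA = ∑ i, p i * g i)
    (R' : Fin N → ℝ) (hR' : ∀ i, R' i = (1 - α) * R i + g i - gA)
    (I₂ : Finset (Fin N)) (hI₂ : ∀ i, i ∈ I₂ ↔ 0 < R i) (hne : I₂.Nonempty)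
    (hΨ : (1 / (N : ℝ)) * ∑ i, Phi (R i) < 2.32) :
    (1 / (I₂.card : ℝ)) * ∑ i ∈ I₂, (Phi (R' i) - Phi (R i)) < (2 / 3) * α :=
  normalHedge_positive_regret_average_step_general N α hα0 hα R g hg p hp gA hgA R' hR' I₂ hI₂ hne
    hΨ
end

section
/- In the discounted Hedge setting with N ≥ 2 actions and learning rate tuned to η = √(4·(α − α²/2)·ln N), the discounted cumulative regret of Hedge to any action i at the start of round j satisfies Ĝ_i^j − Ĝ_A^j ≤ √(ln N/(α − α²/2)). -/
open Finset

/-- Adjusted cumulative gain of action `i` at the start of round `k` (horizon `j`):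
`Ĝ_i^k = Σ_{s=1}^{k-1} (1-α)^{j-1-s}·g_i^s`. -/
noncomputable def Ghat {N : ℕ} (α : ℝ) (j : ℕ) (g : Fin N → ℕ → ℝ)
    (i : Fin N) (k : ℕ) : ℝ :=
  ∑ s ∈ Finset.Icc 1 (k - 1), (1 - α) ^ (j - 1 - s) * g i s

/-- Hedge's gain in round `k`:
`g_A^k = (Σᵢ e^{η·Ĝ_i^k}·g_i^k) / (Σᵢ e^{η·Ĝ_i^k})`. -/
noncomputable def hedgeGain {N : ℕ} (α η : ℝ) (j : ℕ) (g : Fin N → ℕ → ℝ)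
    (k : ℕ) : ℝ :=
  (∑ i, Real.exp (η * Ghat α j g i k) * g i k) /
    ∑ i, Real.exp (η * Ghat α j g i k)

/-- Hedge's adjusted cumulative gain at the start of round `j`:
`Ĝ_A^j = Σ_{s=1}^{j-1} (1-α)^{j-1-s}·g_A^s`. -/
noncomputable def GhatA {N : ℕ} (α η : ℝ) (j : ℕ) (g : Fin N → ℕ → ℝ) : ℝ :=
  ∑ s ∈ Finset.Icc 1 (j - 1), (1 - α) ^ (j - 1 - s) * hedgeGain α η j g s

/-- The weight sum at the start of round `k`: `W_k = Σᵢ e^{η·Ĝ_i^k}`. -/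
noncomputable def Wsum {N : ℕ} (α η : ℝ) (j : ℕ) (g : Fin N → ℕ → ℝ) (k : ℕ) : ℝ :=
  ∑ i, Real.exp (η * Ghat α j g i k)

/-! The potential `log W_k`, with `W_k = Σᵢ exp (η Ĝ_i^k)`, is bounded below at `k = j` by its
single term `η Ĝ_i^j`. Above, Hoeffding's lemma applied to Hedge's weights in round `k` raises it
by at most `η c_k g_A^k + (η c_k)² / 2`, where `c_k = (1 - α)^(j-1-k)`; starting from `log N`
this gives `log N + η Ĝ_A^j + (η² / 2) Σ c_k²`. The geometric series `Σ c_k²` is below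
`1 / (2α - α²)`, and the tuned `η` makes both terms of `log N + η² / (4 (α - α² / 2))` equal. -/

open MeasureTheory ProbabilityTheory in
theorem sum_mul_exp_le_of_mem_Icc {ι : Type*} [Fintype ι] {p x : ι → ℝ} {a b : ℝ}
    (hp : ∀ i, 0 ≤ p i) (hp1 : ∑ i, p i = 1) (hx : ∀ i, x i ∈ Set.Icc a b) (t : ℝ) :
    ∑ i, p i * Real.exp (t * x i) ≤
      Real.exp (t * ∑ i, p i * x i + (b - a) ^ 2 * t ^ 2 / 8) := by
  let _ : MeasurableSpace ι := ⊤
  have hP : ∑ i, ENNReal.ofReal (p i) = 1 := by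
    rw [← ENNReal.ofReal_sum_of_nonneg fun i _ => hp i, hp1, ENNReal.ofReal_one]
  let P := PMF.ofFintype (fun i => ENNReal.ofReal (p i)) hP
  have hE (f : ι → ℝ) : ∫ i, f i ∂P.toMeasure = ∑ i, p i * f i := by
    simp [PMF.integral_eq_sum, P, ENNReal.toReal_ofReal (hp _)]
  have hmgf := (hasSubgaussianMGF_of_mem_Icc (μ := P.toMeasure) (X := x)
    Measurable.of_discrete.aemeasurable (ae_of_all _ hx)).mgf_le t
  have hc : (((‖b - a‖₊ / 2) ^ 2 : NNReal) : ℝ) = (b - a) ^ 2 / 4 := by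
    norm_num [div_pow]
  simp only [mgf, hE, hc] at hmgf
  set μ := ∑ i, p i * x i
  calc ∑ i, p i * Real.exp (t * x i)
      = Real.exp (t * μ) * ∑ i, p i * Real.exp (t * (x i - μ)) := by
        rw [mul_sum]; congr! 1 with i; rw [mul_left_comm, ← Real.exp_add]; ring_nf
    _ ≤ Real.exp (t * μ) * Real.exp ((b - a) ^ 2 / 4 * t ^ 2 / 2) := by gcongr
    _ = _ := by rw [← Real.exp_add]; ring_nf

section LogSumExp

variable {ι : Type*} [Fintype ι] [Nonempty ι]

theorem le_log_sum_exp (G : ι → ℝ) (i : ι) : G i ≤ Real.log (∑ k, Real.exp (G k)) := by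
  rw [Real.le_log_iff_exp_le (by positivity)]
  exact single_le_sum (fun k _ => (Real.exp_pos (G k)).le) (mem_univ i)

theorem log_sum_exp_add_mul_le {x : ι → ℝ} {a b : ℝ} (G : ι → ℝ) (hx : ∀ i, x i ∈ Set.Icc a b)
    (t : ℝ) :
    Real.log (∑ i, Real.exp (G i + t * x i)) ≤ Real.log (∑ i, Real.exp (G i)) +
      t * ((∑ i, Real.exp (G i) * x i) / ∑ i, Real.exp (G i)) + (b - a) ^ 2 * t ^ 2 / 8 := by
  set W := ∑ i, Real.exp (G i)
  have hW : 0 < W := by positivity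
  have hoeffding := sum_mul_exp_le_of_mem_Icc (p := fun i => Real.exp (G i) / W)
    (fun i => by positivity) (by rw [← sum_div, div_self hW.ne']) hx t
  have hsum :
      ∑ i, Real.exp (G i + t * x i) = W * ∑ i, Real.exp (G i) / W * Real.exp (t * x i) := by
    rw [mul_sum]; congr! 1 with i; rw [Real.exp_add]; field_simp
  have hlog := (Real.log_le_iff_le_exp (by positivity)).2 hoeffding
  rw [hsum, Real.log_mul hW.ne' (by positivity), sum_div]
  simp only [div_mul_eq_mul_div] at hlog ⊢
  linarith

end LogSumExp

theorem sum_Icc_pow_sub_le {q : ℝ} (hq0 : 0 ≤ q) (hq1 : q < 1) (n : ℕ) :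
    ∑ s ∈ Icc 1 n, q ^ (n - s) ≤ 1 / (1 - q) := by
  rw [← Ico_add_one_right_eq_Icc, sum_Ico_reflect _ _ le_rfl, Nat.sub_self, Nat.add_sub_cancel,
    ← pow_zero q]
  exact geom_sum_Ico_le_of_lt_one hq0 hq1

section DiscountedHedge

variable {N : ℕ} (α η : ℝ) (j : ℕ) (g : Fin N → ℕ → ℝ)

theorem Ghat_one (i : Fin N) : Ghat α j g i 1 = 0 := by
  simp [Ghat]

theorem Ghat_succ (i : Fin N) {k : ℕ} (hk : 1 ≤ k) :
    Ghat α j g i (k + 1) = Ghat α j g i k + (1 - α) ^ (j - 1 - k) * g i k := by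
  obtain ⟨m, rfl⟩ := Nat.exists_eq_add_of_le' hk
  exact sum_Icc_succ_top (by omega) _

theorem Wsum_one : Wsum α η j g 1 = N := by
  simp [Wsum, Ghat_one]

theorem log_Wsum_succ_le [Nonempty (Fin N)] {k : ℕ} (hk : 1 ≤ k)
    (hg : ∀ i, g i k ∈ Set.Icc (-1 : ℝ) 1) :
    Real.log (Wsum α η j g (k + 1)) ≤ Real.log (Wsum α η j g k) +
      η * (1 - α) ^ (j - 1 - k) * hedgeGain α η j g k + (η * (1 - α) ^ (j - 1 - k)) ^ 2 / 2 := by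
  have h := log_sum_exp_add_mul_le (fun i => η * Ghat α j g i k) hg (η * (1 - α) ^ (j - 1 - k))
  simp only [Wsum, hedgeGain, Ghat_succ α j g _ hk, mul_add, ← mul_assoc]
  exact h.trans_eq (by ring)

theorem log_Wsum_le [Nonempty (Fin N)] (n : ℕ)
    (hg : ∀ i k, 1 ≤ k → k ≤ n → g i k ∈ Set.Icc (-1 : ℝ) 1) :
    Real.log (Wsum α η j g (n + 1)) ≤ Real.log N + ∑ k ∈ Icc 1 n,
      (η * (1 - α) ^ (j - 1 - k) * hedgeGain α η j g k + (η * (1 - α) ^ (j - 1 - k)) ^ 2 / 2) := by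
  induction n with
  | zero => simp [Wsum_one]
  | succ n ih =>
    have hstep := log_Wsum_succ_le α η j g (Nat.le_add_left 1 n) fun i => hg i _ (by omega) le_rfl
    have hprev := ih fun i k hk hkn => hg i k hk (by omega)
    rw [sum_Icc_succ_top (by omega)]
    linarith

theorem mul_regret_le [Nonempty (Fin N)] (hj : 1 ≤ j)
    (hg : ∀ i k, 1 ≤ k → k ≤ j - 1 → g i k ∈ Set.Icc (-1 : ℝ) 1) (i : Fin N) :
    η * (Ghat α j g i j - GhatA α η j g) ≤
      Real.log N + η ^ 2 / 2 * ∑ s ∈ Icc 1 (j - 1), ((1 - α) ^ 2) ^ (j - 1 - s) := by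
  have hpot := log_Wsum_le α η j g (j - 1) hg
  have hsplit : ∑ k ∈ Icc 1 (j - 1), (η * (1 - α) ^ (j - 1 - k) * hedgeGain α η j g k +
      (η * (1 - α) ^ (j - 1 - k)) ^ 2 / 2) =
      η * GhatA α η j g + η ^ 2 / 2 * ∑ s ∈ Icc 1 (j - 1), ((1 - α) ^ 2) ^ (j - 1 - s) := by
    simp only [GhatA, mul_sum, ← sum_add_distrib]
    congr! 1 with s
    rw [mul_pow, ← pow_mul, ← pow_mul, mul_comm 2]
    ring
  rw [Nat.sub_add_cancel hj, hsplit] at hpot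
  have hlow := le_log_sum_exp (fun i => η * Ghat α j g i j) i
  rw [mul_sub]
  exact (sub_le_sub_right (hlow.trans hpot) _).trans_eq (by ring)

end DiscountedHedge

theorem le_sqrt_div_of_mul_le_add_sq_div {β L η R : ℝ} (hβ : 0 < β) (hL : 0 < L)
    (hη : η = √(4 * β * L)) (h : η * R ≤ L + η ^ 2 / (4 * β)) : R ≤ √(L / β) := by
  have hη0 : 0 < η := hη ▸ Real.sqrt_pos.2 (by positivity)
  have hη2 : η ^ 2 / (4 * β) = L := by
    rw [hη, Real.sq_sqrt (by positivity)]; field_simp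
  have hsqrt : √(L / β) * η = 2 * L := by
    rw [hη, ← Real.sqrt_mul (by positivity), show L / β * (4 * β * L) = (2 * L) ^ 2 by
      field_simp; ring, Real.sqrt_sq (by positivity)]
  refine le_of_mul_le_mul_right ?_ hη0
  linarith

/-- with `N ≥ 2` actions and the tuned learning rate
`η = √(4(α - α²/2)·ln N)`, the discounted cumulative regret of Hedge to any action `i`
satisfies `Ĝ_i^j - Ĝ_A^j ≤ √(ln N/(α - α²/2))`. -/
theorem discountedHedge_tuned_regret_bound
    (N : ℕ) (hN : 2 ≤ N)
    (α : ℝ) (hα0 : 0 < α) (hα1 : α < 1)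
    (η : ℝ) (hη : η = Real.sqrt (4 * (α - α ^ 2 / 2) * Real.log N))
    (j : ℕ) (hj : 1 ≤ j)
    (g : Fin N → ℕ → ℝ)
    (hg : ∀ (i : Fin N) (k : ℕ), 1 ≤ k → k ≤ j - 1 → g i k ∈ Set.Icc (-1 : ℝ) 1)
    (i : Fin N) :
    Ghat α j g i j - GhatA α η j g ≤
      Real.sqrt (Real.log N / (α - α ^ 2 / 2)) := by
  have : Nonempty (Fin N) := ⟨⟨0, by omega⟩⟩
  have hβ : 0 < α - α ^ 2 / 2 := by nlinarith
  have hL : 0 < Real.log N := Real.log_pos (by exact_mod_cast hN)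
  have hgeom := sum_Icc_pow_sub_le (sq_nonneg (1 - α)) (by nlinarith) (j - 1)
  refine le_sqrt_div_of_mul_le_add_sq_div hβ hL hη ?_
  calc η * (Ghat α j g i j - GhatA α η j g)
      ≤ Real.log N + η ^ 2 / 2 * ∑ s ∈ Icc 1 (j - 1), ((1 - α) ^ 2) ^ (j - 1 - s) :=
        mul_regret_le α η j g hj hg i
    _ ≤ Real.log N + η ^ 2 / 2 * (1 / (1 - (1 - α) ^ 2)) := by gcongr
    _ = Real.log N + η ^ 2 / (4 * (α - α ^ 2 / 2)) := by
        rw [show 1 - (1 - α) ^ 2 = 2 * (α - α ^ 2 / 2) by ring]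
        field_simp
        ring
end
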